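/- arXiv:1302.5990 — 6 statements merged into one kernel-verified Lean document; each statement's English description precedes it below -/
import Mathlib

section
/- For the block-decoupled linear system with a possibly shared (non-disjoint) input, the viability kernel of a constraint set K is contained in the cross-product of the subsystem viability kernels of the projections of K: Viab_{[0,τ]}(K,𝒰) ⊆ Viab_{[0,τ]}(Π₁K,𝒰) × Viab_{[0,τ]}(Π₂K,𝒰). -/
open Matrix Set

theorem stmt_1_general {k m p : ℕ}
    (A₁ : Matrix (Fin k) (Fin k) ℝ) (A₂ : Matrix (Fin m) (Fin m) ℝ)
    (B₁ : Matrix (Fin k) (Fin p) ℝ) (B₂ : Matrix (Fin m) (Fin p) ℝ)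
    (U : Set (Fin p → ℝ))
    (K : Set ((Fin k → ℝ) × (Fin m → ℝ)))
    (τ : ℝ) :
    {x₀ ∈ K | ∃ u : ℝ → Fin p → ℝ, Measurable u ∧ (∀ t, u t ∈ U) ∧
      ∃ ξ : ℝ → (Fin k → ℝ) × (Fin m → ℝ), ξ 0 = x₀ ∧
        (∀ t, HasDerivAt ξ (A₁.mulVec (ξ t).1 + B₁.mulVec (u t),
            A₂.mulVec (ξ t).2 + B₂.mulVec (u t)) t) ∧
        ∀ t ∈ Icc (0:ℝ) τ, ξ t ∈ K}
    ⊆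
    {y ∈ Prod.fst '' K | ∃ u : ℝ → Fin p → ℝ, Measurable u ∧ (∀ t, u t ∈ U) ∧
      ∃ ξ₁ : ℝ → Fin k → ℝ, ξ₁ 0 = y ∧
        (∀ t, HasDerivAt ξ₁ (A₁.mulVec (ξ₁ t) + B₁.mulVec (u t)) t) ∧
        ∀ t ∈ Icc (0:ℝ) τ, ξ₁ t ∈ Prod.fst '' K}
    ×ˢ
    {y ∈ Prod.snd '' K | ∃ u : ℝ → Fin p → ℝ, Measurable u ∧ (∀ t, u t ∈ U) ∧
      ∃ ξ₂ : ℝ → Fin m → ℝ, ξ₂ 0 = y ∧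
        (∀ t, HasDerivAt ξ₂ (A₂.mulVec (ξ₂ t) + B₂.mulVec (u t)) t) ∧
        ∀ t ∈ Icc (0:ℝ) τ, ξ₂ t ∈ Prod.snd '' K} := by
  rintro x₀ ⟨hx₀, u, hu, huU, ξ, hξ₀, hξ', hξK⟩
  exact ⟨⟨mem_image_of_mem _ hx₀, u, hu, huU, fun t => (ξ t).1, congrArg Prod.fst hξ₀,
      fun t => (hξ' t).fst, fun t ht => mem_image_of_mem _ (hξK t ht)⟩,
    ⟨mem_image_of_mem _ hx₀, u, hu, huU, fun t => (ξ t).2, congrArg Prod.snd hξ₀,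
      fun t => (hξ' t).snd, fun t ht => mem_image_of_mem _ (hξK t ht)⟩⟩

/-- For the block-decoupled linear system with a possibly shared
(non-disjoint) input, the viability kernel of a constraint set `K` is contained in the
cross-product of the subsystem viability kernels of the projections of `K`. -/
theorem stmt_1 {k m p : ℕ}
    (A₁ : Matrix (Fin k) (Fin k) ℝ) (A₂ : Matrix (Fin m) (Fin m) ℝ)
    (B₁ : Matrix (Fin k) (Fin p) ℝ) (B₂ : Matrix (Fin m) (Fin p) ℝ)
    (U : Set (Fin p → ℝ)) (hUcomp : IsCompact U) (hUconv : Convex ℝ U)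
    (K : Set ((Fin k → ℝ) × (Fin m → ℝ))) (hK : IsCompact K) (hKne : K.Nonempty)
    (τ : ℝ) (hτ : 0 < τ) :
    {x₀ ∈ K | ∃ u : ℝ → Fin p → ℝ, Measurable u ∧ (∀ t, u t ∈ U) ∧
      ∃ ξ : ℝ → (Fin k → ℝ) × (Fin m → ℝ), ξ 0 = x₀ ∧
        (∀ t, HasDerivAt ξ (A₁.mulVec (ξ t).1 + B₁.mulVec (u t),
            A₂.mulVec (ξ t).2 + B₂.mulVec (u t)) t) ∧
        ∀ t ∈ Icc (0:ℝ) τ, ξ t ∈ K}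
    ⊆
    {y ∈ Prod.fst '' K | ∃ u : ℝ → Fin p → ℝ, Measurable u ∧ (∀ t, u t ∈ U) ∧
      ∃ ξ₁ : ℝ → Fin k → ℝ, ξ₁ 0 = y ∧
        (∀ t, HasDerivAt ξ₁ (A₁.mulVec (ξ₁ t) + B₁.mulVec (u t)) t) ∧
        ∀ t ∈ Icc (0:ℝ) τ, ξ₁ t ∈ Prod.fst '' K}
    ×ˢ
    {y ∈ Prod.snd '' K | ∃ u : ℝ → Fin p → ℝ, Measurable u ∧ (∀ t, u t ∈ U) ∧
      ∃ ξ₂ : ℝ → Fin m → ℝ, ξ₂ 0 = y ∧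
        (∀ t, HasDerivAt ξ₂ (A₂.mulVec (ξ₂ t) + B₂.mulVec (u t)) t) ∧
        ∀ t ∈ Icc (0:ℝ) τ, ξ₂ t ∈ Prod.snd '' K} :=
  stmt_1_general A₁ A₂ B₁ B₂ U K τ
end

section
/- There exists a 2-dimensional linear system with block-diagonal dynamics and non-disjoint scalar input for which the cross-product of the subsystem viability kernels is not contained in the full viability kernel. Specifically, for ẋ₁ = x₁ + u, ẋ₂ = x₂ − u with u ∈ [−1,1] and K = [−1,1]², the point (1,1) lies in Viab(Π₁K) × Viab(Π₂K) but not in Viab(K). -/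
/-!
Each subsystem can hold its state at `1` with a constant input (`u = -1` for the first,
`u = 1` for the second), but the shared input cancels in `s = x₁ + x₂`, which obeys
`ṡ = s` whatever `u` is. Starting from `s(0) = 2`, it reaches `2 eᵗ > 2` at every `t > 0`,
while `x₁ + x₂ ≤ 2` on `K`.
-/

open Set Real

theorem eq_mul_exp_of_hasDerivAt_mul_self {s : ℝ → ℝ} {a : ℝ}
    (hs : ∀ t, HasDerivAt s (a * s t) t) (t : ℝ) : s t = s 0 * exp (a * t) := by
  have hderiv : ∀ t, HasDerivAt (fun t => s t * exp (-(a * t))) 0 t := fun t => by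
    have he : HasDerivAt (fun t => exp (-(a * t))) (exp (-(a * t)) * -a) t := by
      simpa using ((hasDerivAt_id t).const_mul a).neg.exp
    exact ((hs t).mul he).congr_deriv (by ring)
  have hconst := is_const_of_deriv_eq_zero (fun t => (hderiv t).differentiableAt)
    (fun t => (hderiv t).deriv) t 0
  simp only [mul_zero, neg_zero, exp_zero, mul_one] at hconst
  rw [← hconst, mul_assoc, ← exp_add, neg_add_cancel, exp_zero, mul_one]

theorem fst_add_snd_eq_mul_exp {u : ℝ → ℝ} {ξ : ℝ → ℝ × ℝ}
    (hξ : ∀ t, HasDerivAt ξ ((ξ t).1 + u t, (ξ t).2 - u t) t) (t : ℝ) :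
    (ξ t).1 + (ξ t).2 = ((ξ 0).1 + (ξ 0).2) * exp t := by
  have hsum : ∀ t, HasDerivAt (fun t => (ξ t).1 + (ξ t).2) (1 * ((ξ t).1 + (ξ t).2)) t :=
    fun t => by
      have h₁ : HasDerivAt (fun t => (ξ t).1) ((ξ t).1 + u t) t := (hξ t).fst
      have h₂ : HasDerivAt (fun t => (ξ t).2) ((ξ t).2 - u t) t := (hξ t).snd
      exact (h₁.add h₂).congr_deriv (by ring)
  simpa using eq_mul_exp_of_hasDerivAt_mul_self hsum t

/-- For the 2D system `ẋ₁ = x₁ + u`, `ẋ₂ = x₂ − u` with `u ∈ [−1,1]`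
and `K = [−1,1]²`, the point `(1,1)` lies in the cross-product of the subsystem viability
kernels (of the projected constraints `[−1,1]`) but not in the full viability kernel of `K`. -/
theorem stmt_2 (τ : ℝ) (hτ : 0 < τ) :
    -- (1) viable for the first subsystem ẋ₁ = x₁ + u with constraint [−1,1]
    (∃ u : ℝ → ℝ, Measurable u ∧ (∀ t, u t ∈ Icc (-1:ℝ) 1) ∧
      ∃ ξ : ℝ → ℝ, ξ 0 = 1 ∧ (∀ t, HasDerivAt ξ (ξ t + u t) t) ∧
        ∀ t ∈ Icc (0:ℝ) τ, ξ t ∈ Icc (-1:ℝ) 1) ∧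
    -- (2) viable for the second subsystem ẋ₂ = x₂ − u with constraint [−1,1]
    (∃ u : ℝ → ℝ, Measurable u ∧ (∀ t, u t ∈ Icc (-1:ℝ) 1) ∧
      ∃ ξ : ℝ → ℝ, ξ 0 = 1 ∧ (∀ t, HasDerivAt ξ (ξ t - u t) t) ∧
        ∀ t ∈ Icc (0:ℝ) τ, ξ t ∈ Icc (-1:ℝ) 1) ∧
    -- (3) not viable for the full system with constraint K = [−1,1] × [−1,1]
    ¬ (∃ u : ℝ → ℝ, Measurable u ∧ (∀ t, u t ∈ Icc (-1:ℝ) 1) ∧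
      ∃ ξ : ℝ → ℝ × ℝ, ξ 0 = (1, 1) ∧
        (∀ t, HasDerivAt ξ ((ξ t).1 + u t, (ξ t).2 - u t) t) ∧
        ∀ t ∈ Icc (0:ℝ) τ, ξ t ∈ Icc (-1:ℝ) 1 ×ˢ Icc (-1:ℝ) 1) := by
  refine ⟨⟨fun _ => -1, measurable_const, fun _ => by norm_num, fun _ => 1, rfl,
      fun t => by simpa using hasDerivAt_const t (1 : ℝ), fun _ _ => by norm_num⟩,
    ⟨fun _ => 1, measurable_const, fun _ => by norm_num, fun _ => 1, rfl,
      fun t => by simpa using hasDerivAt_const t (1 : ℝ), fun _ _ => by norm_num⟩, ?_⟩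
  rintro ⟨u, -, -, ξ, hξ0, hξ, hK⟩
  have hsum : (ξ τ).1 + (ξ τ).2 = 2 * exp τ := by
    rw [fst_add_snd_eq_mul_exp hξ, hξ0]
    norm_num
  obtain ⟨⟨-, h₁⟩, ⟨-, h₂⟩⟩ := hK τ ⟨hτ.le, le_rfl⟩
  linarith [one_lt_exp_iff.mpr hτ]
end

section
/- If K = K₁ × K₂ is a cross-product of sets in the two subspaces, and the input is disjoint across the block-decoupled subsystems (𝒰 = 𝒰₁ × 𝒰₂, B block-diagonal), then the viability kernel of K equals the cross-product of the subsystem viability kernels: Viab_{[0,τ]}(K,𝒰) = Viab_{[0,τ]}(Π₁K,𝒰₁) × Viab_{[0,τ]}(Π₂K,𝒰₂). -/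
open Matrix Set

theorem stmt_5_general {k m p r : ℕ}
    (A₁ : Matrix (Fin k) (Fin k) ℝ) (A₂ : Matrix (Fin m) (Fin m) ℝ)
    (B₁ : Matrix (Fin k) (Fin p) ℝ) (B₂ : Matrix (Fin m) (Fin r) ℝ)
    (U₁ : Set (Fin p → ℝ)) (U₂ : Set (Fin r → ℝ))
    (K₁ : Set (Fin k → ℝ)) (K₂ : Set (Fin m → ℝ)) (τ : ℝ) :
    {x₀ ∈ K₁ ×ˢ K₂ | ∃ u : ℝ → (Fin p → ℝ) × (Fin r → ℝ), Measurable u ∧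
      (∀ t, u t ∈ U₁ ×ˢ U₂) ∧
      ∃ ξ : ℝ → (Fin k → ℝ) × (Fin m → ℝ), ξ 0 = x₀ ∧
        (∀ t, HasDerivAt ξ (A₁.mulVec (ξ t).1 + B₁.mulVec (u t).1,
            A₂.mulVec (ξ t).2 + B₂.mulVec (u t).2) t) ∧
        ∀ t ∈ Icc (0:ℝ) τ, ξ t ∈ K₁ ×ˢ K₂}
    =
    {y ∈ K₁ | ∃ u₁ : ℝ → Fin p → ℝ, Measurable u₁ ∧ (∀ t, u₁ t ∈ U₁) ∧
      ∃ ξ₁ : ℝ → Fin k → ℝ, ξ₁ 0 = y ∧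
        (∀ t, HasDerivAt ξ₁ (A₁.mulVec (ξ₁ t) + B₁.mulVec (u₁ t)) t) ∧
        ∀ t ∈ Icc (0:ℝ) τ, ξ₁ t ∈ K₁}
    ×ˢ
    {y ∈ K₂ | ∃ u₂ : ℝ → Fin r → ℝ, Measurable u₂ ∧ (∀ t, u₂ t ∈ U₂) ∧
      ∃ ξ₂ : ℝ → Fin m → ℝ, ξ₂ 0 = y ∧
        (∀ t, HasDerivAt ξ₂ (A₂.mulVec (ξ₂ t) + B₂.mulVec (u₂ t)) t) ∧
        ∀ t ∈ Icc (0:ℝ) τ, ξ₂ t ∈ K₂} := by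
  ext x₀
  constructor
  · rintro ⟨hx, u, hu, huU, ξ, hξ0, hξ, hξK⟩
    exact ⟨⟨hx.1, fun t => (u t).1, hu.fst, fun t => (huU t).1,
        fun t => (ξ t).1, congrArg Prod.fst hξ0, fun t => (hξ t).fst, fun t ht => (hξK t ht).1⟩,
      ⟨hx.2, fun t => (u t).2, hu.snd, fun t => (huU t).2,
        fun t => (ξ t).2, congrArg Prod.snd hξ0, fun t => (hξ t).snd, fun t ht => (hξK t ht).2⟩⟩
  · rintro ⟨⟨hx₁, u₁, hu₁, hu₁U, ξ₁, hξ₁0, hξ₁, hξ₁K⟩, ⟨hx₂, u₂, hu₂, hu₂U, ξ₂, hξ₂0, hξ₂, hξ₂K⟩⟩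
    exact ⟨⟨hx₁, hx₂⟩, fun t => (u₁ t, u₂ t), hu₁.prodMk hu₂, fun t => ⟨hu₁U t, hu₂U t⟩,
      fun t => (ξ₁ t, ξ₂ t), Prod.ext hξ₁0 hξ₂0, fun t => (hξ₁ t).prodMk (hξ₂ t),
      fun t ht => ⟨hξ₁K t ht, hξ₂K t ht⟩⟩

/-- If `K = K₁ × K₂` is a cross-product of sets in the two subspaces, and
the input is disjoint across the block-decoupled subsystems (`𝒰 = 𝒰₁ × 𝒰₂`, `B` block
diagonal), then the viability kernel of `K` equals the cross-product of the subsystem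
viability kernels. -/
theorem stmt_5 {k m p r : ℕ}
    (A₁ : Matrix (Fin k) (Fin k) ℝ) (A₂ : Matrix (Fin m) (Fin m) ℝ)
    (B₁ : Matrix (Fin k) (Fin p) ℝ) (B₂ : Matrix (Fin m) (Fin r) ℝ)
    (U₁ : Set (Fin p → ℝ)) (hU₁comp : IsCompact U₁) (hU₁conv : Convex ℝ U₁)
    (U₂ : Set (Fin r → ℝ)) (hU₂comp : IsCompact U₂) (hU₂conv : Convex ℝ U₂)
    (K₁ : Set (Fin k → ℝ)) (hK₁ : IsCompact K₁)
    (K₂ : Set (Fin m → ℝ)) (hK₂ : IsCompact K₂)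
    (τ : ℝ) (hτ : 0 < τ) :
    {x₀ ∈ K₁ ×ˢ K₂ | ∃ u : ℝ → (Fin p → ℝ) × (Fin r → ℝ), Measurable u ∧
      (∀ t, u t ∈ U₁ ×ˢ U₂) ∧
      ∃ ξ : ℝ → (Fin k → ℝ) × (Fin m → ℝ), ξ 0 = x₀ ∧
        (∀ t, HasDerivAt ξ (A₁.mulVec (ξ t).1 + B₁.mulVec (u t).1,
            A₂.mulVec (ξ t).2 + B₂.mulVec (u t).2) t) ∧
        ∀ t ∈ Icc (0:ℝ) τ, ξ t ∈ K₁ ×ˢ K₂}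
    =
    {y ∈ K₁ | ∃ u₁ : ℝ → Fin p → ℝ, Measurable u₁ ∧ (∀ t, u₁ t ∈ U₁) ∧
      ∃ ξ₁ : ℝ → Fin k → ℝ, ξ₁ 0 = y ∧
        (∀ t, HasDerivAt ξ₁ (A₁.mulVec (ξ₁ t) + B₁.mulVec (u₁ t)) t) ∧
        ∀ t ∈ Icc (0:ℝ) τ, ξ₁ t ∈ K₁}
    ×ˢ
    {y ∈ K₂ | ∃ u₂ : ℝ → Fin r → ℝ, Measurable u₂ ∧ (∀ t, u₂ t ∈ U₂) ∧
      ∃ ξ₂ : ℝ → Fin m → ℝ, ξ₂ 0 = y ∧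
        (∀ t, HasDerivAt ξ₂ (A₂.mulVec (ξ₂ t) + B₂.mulVec (u₂ t)) t) ∧
        ∀ t ∈ Icc (0:ℝ) τ, ξ₂ t ∈ K₂} :=
  stmt_5_general A₁ A₂ B₁ B₂ U₁ U₂ K₁ K₂ τ
end

section
/- If Z ∈ ℝ^{(n−k)×k} is a root of the nonsymmetric algebraic Riccati equation Z Ã₁₁ − Ã₂₂ Z − Z Ã₁₂ Z + Ã₂₁ = 0 (with coefficients as defined), then L := −B₂B₁† + Z − Z B₁B₁† simultaneously satisfies L B₁ + B₂ = 0 and L A₁₁ − A₂₂ L − L A₁₂ L + A₂₁ = δ 𝓕(Z), where 𝓕(Z) = Z(A₁₂ − B₁B₁†A₁₂)Z + (A₂₂ − B₂B₁†A₁₂)Z. -/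
/-!
Write `P = B₁B₁†`, `Q = B₂B₁†` and `D = P - (δ + 1)I`. Multiplying the transformed NARE on the
right by the invertible `D` clears the inverses in `Ã₁₁, Ã₂₁`, and since `D = (P - I) - δI` the
result is `R̂(Z) - δ𝓕(Z) = 0` with `R̂(Z) = ZΞ + Γ + 𝓕(Z)(P - I)`. Independently of the NARE, the
Riccati residual of `L = -Q + Z(I - P)` is identically `R̂(Z)`. Finally `L B₁ + B₂ = 0` because
`P B₁ = B₁` and `Q B₁ = B₂`; the latter holds since `B₁†B₁` is the orthogonal projector onto
`𝒞(B₁ᵀ) ⊇ 𝒞(B₂ᵀ)`.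
-/

open Matrix

namespace Matrix

variable {R : Type*} [CommRing R] {k l m p : Type*} [Fintype k] [Fintype l] [Fintype m] [Fintype p]

theorem mul_eq_self_of_range_mulVecLin_le {P : Matrix l l R} {M : Matrix l m R}
    {N : Matrix l p R} (hPM : P * M = M)
    (hNM : LinearMap.range N.mulVecLin ≤ LinearMap.range M.mulVecLin) : P * N = N := by
  rw [ext_iff_mulVec]
  intro v
  obtain ⟨w, hw⟩ := hNM ⟨v, rfl⟩
  simp only [mulVecLin_apply] at hw
  rw [← mulVec_mulVec, ← hw, mulVec_mulVec, hPM]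

theorem mul_mul_eq_of_range_transpose_le {B : Matrix k p R} {C : Matrix m p R}
    {G : Matrix p k R} (hB : B * G * B = B) (hGB : (G * B)ᵀ = G * B)
    (hCB : LinearMap.range Cᵀ.mulVecLin ≤ LinearMap.range Bᵀ.mulVecLin) :
    C * G * B = C := by
  have hfix : G * B * Bᵀ = Bᵀ := by
    rw [← hGB, ← transpose_mul, ← Matrix.mul_assoc, hB]
  have := congrArg transpose (mul_eq_self_of_range_mulVecLin_le hfix hCB)
  rwa [transpose_mul, transpose_transpose, hGB, ← Matrix.mul_assoc] at this

end Matrix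

section Riccati

variable {R : Type*} [CommRing R] {k m : Type*} [Fintype k] [Fintype m]

def riccatiResidual (A₁₁ : Matrix k k R) (A₁₂ : Matrix k m R) (A₂₁ : Matrix m k R)
    (A₂₂ : Matrix m m R) (X : Matrix m k R) : Matrix m k R :=
  X * A₁₁ - A₂₂ * X - X * A₁₂ * X + A₂₁

variable [DecidableEq k]

theorem riccatiResidual_neg_add_sub_mul (A₁₁ : Matrix k k R) (A₁₂ : Matrix k m R)
    (A₂₁ : Matrix m k R) (A₂₂ : Matrix m m R) (P : Matrix k k R) (Q Z : Matrix m k R) :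
    riccatiResidual A₁₁ A₁₂ A₂₁ A₂₂ (-Q + Z - Z * P) =
      Z * -((P - 1) * (A₁₁ + A₁₂ * Q)) + ((A₂₂ * Q + A₂₁) - Q * (A₁₂ * Q + A₁₁)) +
        (Z * (A₁₂ - P * A₁₂) * Z + (A₂₂ - Q * A₁₂) * Z) * (P - 1) := by
  simp only [riccatiResidual, sub_eq_add_neg, Matrix.mul_add, Matrix.add_mul, Matrix.neg_mul,
    Matrix.mul_neg, neg_add, neg_neg, Matrix.mul_one, Matrix.one_mul, Matrix.mul_assoc]
  abel

theorem riccatiResidual_mul_inv_eq_zero_iff {δ : R} {P : Matrix k k R}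
    (hD : IsUnit (P - (δ + 1) • 1)) (Ξ : Matrix k k R) (C₁₂ : Matrix k m R)
    (Γ : Matrix m k R) (C₂₂ : Matrix m m R) (Z : Matrix m k R) :
    riccatiResidual (Ξ * (P - (δ + 1) • 1)⁻¹) (-C₁₂) (Γ * (P - (δ + 1) • 1)⁻¹) (-C₂₂) Z = 0 ↔
      Z * Ξ + Γ + (Z * C₁₂ * Z + C₂₂ * Z) * (P - 1) = δ • (Z * C₁₂ * Z + C₂₂ * Z) := by
  set D := P - (δ + 1) • 1
  have hdet : IsUnit D.det := (isUnit_iff_isUnit_det D).mp hD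
  have hmul : riccatiResidual (Ξ * D⁻¹) (-C₁₂) (Γ * D⁻¹) (-C₂₂) Z * D =
      Z * Ξ + Γ + (Z * C₁₂ * Z + C₂₂ * Z) * (P - 1) - δ • (Z * C₁₂ * Z + C₂₂ * Z) := by
    calc riccatiResidual (Ξ * D⁻¹) (-C₁₂) (Γ * D⁻¹) (-C₂₂) Z * D
        = Z * Ξ + Γ + (Z * C₁₂ * Z + C₂₂ * Z) * D := by
          simp only [riccatiResidual, Matrix.sub_mul, Matrix.add_mul, Matrix.mul_assoc,
            nonsing_inv_mul D hdet, Matrix.mul_one, Matrix.mul_neg, Matrix.neg_mul]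
          abel
      _ = _ := by
          simp only [D, Matrix.mul_sub, Matrix.mul_add, Matrix.mul_smul, Matrix.mul_one,
            add_smul, one_smul]
          abel
  conv_rhs => rw [← sub_eq_zero, ← hmul]
  refine ⟨fun h ↦ by rw [h, Matrix.zero_mul], fun h ↦ ?_⟩
  simpa [Matrix.mul_assoc, mul_nonsing_inv D hdet] using congrArg (· * D⁻¹) h

end Riccati

theorem stmt_13_general {k m p : ℕ}
    (A₁₁ : Matrix (Fin k) (Fin k) ℝ) (A₁₂ : Matrix (Fin k) (Fin m) ℝ)
    (A₂₁ : Matrix (Fin m) (Fin k) ℝ) (A₂₂ : Matrix (Fin m) (Fin m) ℝ)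
    (B₁ : Matrix (Fin k) (Fin p) ℝ) (B₂ : Matrix (Fin m) (Fin p) ℝ)
    -- `Bd` is the Moore–Penrose pseudoinverse `B₁†` of `B₁`
    (Bd : Matrix (Fin p) (Fin k) ℝ)
    (h1 : B₁ * Bd * B₁ = B₁) (h4 : (Bd * B₁)ᵀ = Bd * B₁)
    -- solvability condition 𝒞(B₂ᵀ) ⊆ 𝒞(B₁ᵀ)
    (hrange : LinearMap.range (Matrix.mulVecLin B₂ᵀ) ≤ LinearMap.range (Matrix.mulVecLin B₁ᵀ))
    (δ : ℝ)
    (hinv : IsUnit (B₁ * Bd - (δ + 1) • (1 : Matrix (Fin k) (Fin k) ℝ)))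
    -- the coefficient matrices
    (Ξ : Matrix (Fin k) (Fin k) ℝ)
    (hΞ : Ξ = -((B₁ * Bd - 1) * (A₁₁ + A₁₂ * (B₂ * Bd))))
    (Γ : Matrix (Fin m) (Fin k) ℝ)
    (hΓ : Γ = (A₂₂ * (B₂ * Bd) + A₂₁) - (B₂ * Bd) * (A₁₂ * (B₂ * Bd) + A₁₁))
    (tA₁₁ : Matrix (Fin k) (Fin k) ℝ)
    (htA₁₁ : tA₁₁ = Ξ * (B₁ * Bd - (δ + 1) • (1 : Matrix (Fin k) (Fin k) ℝ))⁻¹)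
    (tA₂₁ : Matrix (Fin m) (Fin k) ℝ)
    (htA₂₁ : tA₂₁ = Γ * (B₁ * Bd - (δ + 1) • (1 : Matrix (Fin k) (Fin k) ℝ))⁻¹)
    (tA₁₂ : Matrix (Fin k) (Fin m) ℝ) (htA₁₂ : tA₁₂ = B₁ * Bd * A₁₂ - A₁₂)
    (tA₂₂ : Matrix (Fin m) (Fin m) ℝ) (htA₂₂ : tA₂₂ = B₂ * Bd * A₁₂ - A₂₂)
    -- `Z` is a root of the NARE
    (Z : Matrix (Fin m) (Fin k) ℝ)
    (hZ : Z * tA₁₁ - tA₂₂ * Z - Z * tA₁₂ * Z + tA₂₁ = 0)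
    -- the corresponding `L` and `𝓕(Z)`
    (L : Matrix (Fin m) (Fin k) ℝ) (hL : L = -(B₂ * Bd) + Z - Z * (B₁ * Bd))
    (F : Matrix (Fin m) (Fin k) ℝ)
    (hF : F = Z * (A₁₂ - B₁ * Bd * A₁₂) * Z + (A₂₂ - B₂ * Bd * A₁₂) * Z) :
    L * B₁ + B₂ = 0 ∧
    L * A₁₁ - A₂₂ * L - L * A₁₂ * L + A₂₁ = δ • F := by
  subst hL
  refine ⟨?_, ?_⟩
  · rw [Matrix.sub_mul, Matrix.add_mul, Matrix.neg_mul, Matrix.mul_assoc Z, h1,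
      mul_mul_eq_of_range_transpose_le h1 h4 hrange]
    abel
  · subst hΞ hΓ htA₁₁ htA₂₁ htA₁₂ htA₂₂ hF
    rw [← neg_sub A₁₂, ← neg_sub A₂₂] at hZ
    rw [← (riccatiResidual_mul_inv_eq_zero_iff hinv _ _ _ _ Z).1 hZ]
    exact riccatiResidual_neg_add_sub_mul _ _ _ _ _ _ Z

/-- If `Z` is a root of the nonsymmetric algebraic Riccati equation
`Z tA₁₁ − tA₂₂ Z − Z tA₁₂ Z + tA₂₁ = 0` (with the coefficients defined from the system
blocks and the free parameter `δ`), then `L := −B₂B₁† + Z − Z B₁B₁†` simultaneously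
satisfies `L B₁ + B₂ = 0` and `L A₁₁ − A₂₂ L − L A₁₂ L + A₂₁ = δ 𝓕(Z)`, where
`𝓕(Z) = Z(A₁₂ − B₁B₁†A₁₂)Z + (A₂₂ − B₂B₁†A₁₂)Z`. -/
theorem stmt_13 {k m p : ℕ}
    (A₁₁ : Matrix (Fin k) (Fin k) ℝ) (A₁₂ : Matrix (Fin k) (Fin m) ℝ)
    (A₂₁ : Matrix (Fin m) (Fin k) ℝ) (A₂₂ : Matrix (Fin m) (Fin m) ℝ)
    (B₁ : Matrix (Fin k) (Fin p) ℝ) (B₂ : Matrix (Fin m) (Fin p) ℝ)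
    -- `Bd` is the Moore–Penrose pseudoinverse `B₁†` of `B₁`
    (Bd : Matrix (Fin p) (Fin k) ℝ)
    (h1 : B₁ * Bd * B₁ = B₁) (h2 : Bd * B₁ * Bd = Bd)
    (h3 : (B₁ * Bd)ᵀ = B₁ * Bd) (h4 : (Bd * B₁)ᵀ = Bd * B₁)
    -- solvability condition 𝒞(B₂ᵀ) ⊆ 𝒞(B₁ᵀ)
    (hrange : LinearMap.range (Matrix.mulVecLin B₂ᵀ) ≤ LinearMap.range (Matrix.mulVecLin B₁ᵀ))
    (δ : ℝ) (hδ0 : δ ≠ 0) (hδ1 : δ ≠ -1)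
    (hinv : IsUnit (B₁ * Bd - (δ + 1) • (1 : Matrix (Fin k) (Fin k) ℝ)))
    -- the coefficient matrices
    (Ξ : Matrix (Fin k) (Fin k) ℝ)
    (hΞ : Ξ = -((B₁ * Bd - 1) * (A₁₁ + A₁₂ * (B₂ * Bd))))
    (Γ : Matrix (Fin m) (Fin k) ℝ)
    (hΓ : Γ = (A₂₂ * (B₂ * Bd) + A₂₁) - (B₂ * Bd) * (A₁₂ * (B₂ * Bd) + A₁₁))
    (tA₁₁ : Matrix (Fin k) (Fin k) ℝ)
    (htA₁₁ : tA₁₁ = Ξ * (B₁ * Bd - (δ + 1) • (1 : Matrix (Fin k) (Fin k) ℝ))⁻¹)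
    (tA₂₁ : Matrix (Fin m) (Fin k) ℝ)
    (htA₂₁ : tA₂₁ = Γ * (B₁ * Bd - (δ + 1) • (1 : Matrix (Fin k) (Fin k) ℝ))⁻¹)
    (tA₁₂ : Matrix (Fin k) (Fin m) ℝ) (htA₁₂ : tA₁₂ = B₁ * Bd * A₁₂ - A₁₂)
    (tA₂₂ : Matrix (Fin m) (Fin m) ℝ) (htA₂₂ : tA₂₂ = B₂ * Bd * A₁₂ - A₂₂)
    -- `Z` is a root of the NARE
    (Z : Matrix (Fin m) (Fin k) ℝ)
    (hZ : Z * tA₁₁ - tA₂₂ * Z - Z * tA₁₂ * Z + tA₂₁ = 0)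
    -- the corresponding `L` and `𝓕(Z)`
    (L : Matrix (Fin m) (Fin k) ℝ) (hL : L = -(B₂ * Bd) + Z - Z * (B₁ * Bd))
    (F : Matrix (Fin m) (Fin k) ℝ)
    (hF : F = Z * (A₁₂ - B₁ * Bd * A₁₂) * Z + (A₂₂ - B₂ * Bd * A₁₂) * Z) :
    L * B₁ + B₂ = 0 ∧
    L * A₁₁ - A₂₂ * L - L * A₁₂ * L + A₂₁ = δ • F :=
  stmt_13_general A₁₁ A₁₂ A₂₁ A₂₂ B₁ B₂ Bd h1 h4 hrange δ hinv Ξ hΞ Γ hΓ tA₁₁ htA₁₁ tA₂₁ htA₂₁ tA₁₂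
    htA₁₂ tA₂₂ htA₂₂ Z hZ L hL F hF
end

section
/- Asymptotic coupling limit: with Z(δ) = Z₀(δ) (the initial value of the fixed-point iteration) where Z₀(δ) = (B₂B₁†A₁₂ − A₂₂)⁻¹ Γ (B₁B₁† − (δ+1)I)⁻¹, one has lim_{δ→±∞} ‖δ𝓕(Z(δ))‖ = ‖Γ‖, where 𝓕(Z) = Z(A₁₂ − B₁B₁†A₁₂)Z + (A₂₂ − B₂B₁†A₁₂)Z and Γ = (A₂₂B₂B₁† + A₂₁) − B₂B₁†(A₁₂B₂B₁† + A₁₁). -/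
/-!
With `P = B₁B₁†` idempotent and `t = (δ + 1)⁻¹`, the resolvent is
`(P - (δ + 1)I)⁻¹ = -δ⁻¹((1 - t)I + tP)`, and since `P(A₁₂ - PA₁₂) = 0` the quadratic term
collapses, giving exactly `δ𝓕(Z₀(δ)) = (t Q₁P₁Q₁ + Γ)((1 - t)I + tP)`. The right-hand side is
continuous in `t` and equals `Γ` at `t = 0`, while `t → 0` as `|δ| → ∞`.
-/

open Matrix Filter Bornology

attribute [local instance] Matrix.linftyOpNormedAddCommGroup Matrix.linftyOpNormedRing

namespace Matrix

variable {K : Type*} [Field K] {m n : Type*} [Fintype m] [Fintype n] [DecidableEq n]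

theorem IsIdempotentElem.inv_sub_smul_one {P : Matrix n n K} (hP : IsIdempotentElem P) {δ : K}
    (hδ : δ ≠ 0) (hδ₁ : δ + 1 ≠ 0) :
    (P - (δ + 1) • (1 : Matrix n n K))⁻¹
      = -δ⁻¹ • ((1 - (δ + 1)⁻¹) • (1 : Matrix n n K) + (δ + 1)⁻¹ • P) := by
  apply inv_eq_right_inv
  simp only [sub_mul, mul_smul_comm, mul_add, mul_one, smul_mul_assoc, one_mul, hP.eq, smul_add,
    smul_sub, smul_smul]
  match_scalars <;> field_simp <;> ring

-- The paper's `𝓕` is `riccati P₁ P₂`.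
def riccati (P₁ : Matrix n m K) (W : Matrix m m K) (Z : Matrix m n K) : Matrix m n K :=
  Z * P₁ * Z - W * Z

theorem smul_riccati_neg_inv_smul {P₁ : Matrix n m K} {W : Matrix m m K} {Q Γ : Matrix m n K}
    {P : Matrix n n K} (hW : W * Q = Γ) (hPP₁ : P * P₁ = 0) {δ t : K} (hδ : δ ≠ 0)
    (ht : δ * t = 1 - t) :
    δ • riccati P₁ W (-δ⁻¹ • (Q * ((1 - t) • 1 + t • P)))
      = (t • (Q * P₁ * Q) + Γ) * ((1 - t) • 1 + t • P) := by
  set N := (1 - t) • 1 + t • P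
  have hN : N * P₁ = (1 - t) • P₁ := by
    rw [Matrix.add_mul, Matrix.smul_mul, Matrix.smul_mul, hPP₁, Matrix.one_mul, smul_zero,
      add_zero]
  calc δ • riccati P₁ W (-δ⁻¹ • (Q * N))
      = (δ * δ⁻¹ ^ 2) • (Q * (N * P₁) * Q * N) + (δ * δ⁻¹) • (W * Q * N) := by
        simp only [riccati, Matrix.neg_mul, Matrix.mul_neg, Matrix.smul_mul, Matrix.mul_smul,
          Matrix.mul_assoc, neg_smul, smul_neg, neg_neg, sub_neg_eq_add, smul_add]
        module
    _ = (t • (Q * P₁ * Q) + Γ) * N := by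
      have hcoeff : δ * δ⁻¹ ^ 2 * (1 - t) = t := by rw [← ht]; field_simp
      rw [hN, hW, Matrix.mul_smul, Matrix.smul_mul, Matrix.smul_mul, smul_smul, hcoeff,
        mul_inv_cancel₀ hδ, one_smul, Matrix.add_mul, Matrix.smul_mul]

end Matrix

theorem stmt_18_general {k m p : ℕ}
    (A₁₂ : Matrix (Fin k) (Fin m) ℝ) (A₂₂ : Matrix (Fin m) (Fin m) ℝ)
    (B₁ : Matrix (Fin k) (Fin p) ℝ) (B₂ : Matrix (Fin m) (Fin p) ℝ)
    -- `Bd` is the Moore–Penrose pseudoinverse `B₁†` of `B₁`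
    (Bd : Matrix (Fin p) (Fin k) ℝ)
    (h1 : B₁ * Bd * B₁ = B₁)
    (hinv : IsUnit (B₂ * Bd * A₁₂ - A₂₂))
    (Γ : Matrix (Fin m) (Fin k) ℝ)
    (Z₀ : ℝ → Matrix (Fin m) (Fin k) ℝ)
    (hZ₀ : ∀ δ : ℝ, Z₀ δ = (B₂ * Bd * A₁₂ - A₂₂)⁻¹ * Γ
        * (B₁ * Bd - (δ + 1) • (1 : Matrix (Fin k) (Fin k) ℝ))⁻¹)
    (F : Matrix (Fin m) (Fin k) ℝ → Matrix (Fin m) (Fin k) ℝ)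
    (hF : ∀ Z, F Z = Z * (A₁₂ - B₁ * Bd * A₁₂) * Z + (A₂₂ - B₂ * Bd * A₁₂) * Z) :
    Tendsto (fun δ : ℝ => ‖δ • F (Z₀ δ)‖) atTop (nhds ‖Γ‖) ∧
    Tendsto (fun δ : ℝ => ‖δ • F (Z₀ δ)‖) atBot (nhds ‖Γ‖) := by
  have hP : IsIdempotentElem (B₁ * Bd) := by
    rw [IsIdempotentElem, ← Matrix.mul_assoc, h1]
  have hPP₁ : B₁ * Bd * (A₁₂ - B₁ * Bd * A₁₂) = 0 := by
    rw [Matrix.mul_sub, ← Matrix.mul_assoc, hP.eq, sub_self]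
  have hW : (B₂ * Bd * A₁₂ - A₂₂) * ((B₂ * Bd * A₁₂ - A₂₂)⁻¹ * Γ) = Γ :=
    mul_nonsing_inv_cancel_left _ _ ((isUnit_iff_isUnit_det _).mp hinv)
  set G : ℝ → Matrix (Fin m) (Fin k) ℝ := fun t =>
    (t • ((B₂ * Bd * A₁₂ - A₂₂)⁻¹ * Γ * (A₁₂ - B₁ * Bd * A₁₂) * ((B₂ * Bd * A₁₂ - A₂₂)⁻¹ * Γ))
      + Γ) * ((1 - t) • 1 + t • (B₁ * Bd))
  have hFG : ∀ᶠ δ in cobounded ℝ, G (δ + 1)⁻¹ = δ • F (Z₀ δ) := by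
    filter_upwards [eventually_ne_cobounded 0, eventually_ne_cobounded (-1)] with δ hδ hδ_ne_neg_one
    have hδ₁ : δ + 1 ≠ 0 := by rwa [Ne, add_eq_zero_iff_eq_neg]
    rw [hF, ← neg_sub (B₂ * Bd * A₁₂) A₂₂, Matrix.neg_mul, ← sub_eq_add_neg, ← riccati, hZ₀,
      hP.inv_sub_smul_one hδ hδ₁, Matrix.mul_smul, smul_riccati_neg_inv_smul hW hPP₁ hδ]
    field_simp
    ring
  have hG : Tendsto G (nhds 0) (nhds Γ) := by
    simpa [G] using (show Continuous G by fun_prop).tendsto 0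
  have hlim := ((hG.comp (tendsto_inv₀_cobounded.comp (tendsto_add_const_cobounded 1))).congr'
    hFG).norm
  rw [Metric.cobounded_eq_cocompact] at hlim
  exact ⟨hlim.mono_left atTop_le_cocompact, hlim.mono_left atBot_le_cocompact⟩

/-- Asymptotic coupling limit: with
`Z(δ) = Z₀(δ) = (B₂B₁†A₁₂ − A₂₂)⁻¹ Γ (B₁B₁† − (δ+1)I)⁻¹` (the initial value of the
fixed-point iteration), `lim_{δ→±∞} ‖δ𝓕(Z(δ))‖ = ‖Γ‖`, where
`𝓕(Z) = Z(A₁₂ − B₁B₁†A₁₂)Z + (A₂₂ − B₂B₁†A₁₂)Z` and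
`Γ = (A₂₂B₂B₁† + A₂₁) − B₂B₁†(A₁₂B₂B₁† + A₁₁)`. -/
theorem stmt_18 {k m p : ℕ}
    (A₁₁ : Matrix (Fin k) (Fin k) ℝ) (A₁₂ : Matrix (Fin k) (Fin m) ℝ)
    (A₂₁ : Matrix (Fin m) (Fin k) ℝ) (A₂₂ : Matrix (Fin m) (Fin m) ℝ)
    (B₁ : Matrix (Fin k) (Fin p) ℝ) (B₂ : Matrix (Fin m) (Fin p) ℝ)
    -- `Bd` is the Moore–Penrose pseudoinverse `B₁†` of `B₁`
    (Bd : Matrix (Fin p) (Fin k) ℝ)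
    (h1 : B₁ * Bd * B₁ = B₁) (h2 : Bd * B₁ * Bd = Bd)
    (h3 : (B₁ * Bd)ᵀ = B₁ * Bd) (h4 : (Bd * B₁)ᵀ = Bd * B₁)
    (hinv : IsUnit (B₂ * Bd * A₁₂ - A₂₂))
    (Γ : Matrix (Fin m) (Fin k) ℝ)
    (hΓ : Γ = (A₂₂ * (B₂ * Bd) + A₂₁) - (B₂ * Bd) * (A₁₂ * (B₂ * Bd) + A₁₁))
    (Z₀ : ℝ → Matrix (Fin m) (Fin k) ℝ)
    (hZ₀ : ∀ δ : ℝ, Z₀ δ = (B₂ * Bd * A₁₂ - A₂₂)⁻¹ * Γ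
        * (B₁ * Bd - (δ + 1) • (1 : Matrix (Fin k) (Fin k) ℝ))⁻¹)
    (F : Matrix (Fin m) (Fin k) ℝ → Matrix (Fin m) (Fin k) ℝ)
    (hF : ∀ Z, F Z = Z * (A₁₂ - B₁ * Bd * A₁₂) * Z + (A₂₂ - B₂ * Bd * A₁₂) * Z) :
    Tendsto (fun δ : ℝ => ‖δ • F (Z₀ δ)‖) atTop (nhds ‖Γ‖) ∧
    Tendsto (fun δ : ℝ => ‖δ • F (Z₀ δ)‖) atBot (nhds ‖Γ‖) :=
  stmt_18_general A₁₂ A₂₂ B₁ B₂ Bd h1 hinv Γ Z₀ hZ₀ F hF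
end

section
/- Conservative coupling bound: under the stated definitions, for all δ ∈ ℝ\{−1,0}, ‖δ𝓕(Z(δ))‖ ≤ (1/|δ|)((|δ|+1)/|δ+1|)² a + ((|δ|+1)/|δ+1|) b, where a = α(b/β)², b = 3‖B₁B₁†‖γβ, γ = ‖Γ‖·‖(A₂₂ − B₂B₁†A₁₂)⁻¹‖, α = ‖A₁₂ − B₁B₁†A₁₂‖, β = ‖A₂₂ − B₂B₁†A₁₂‖, and Z(δ) = Z₀ + D with ‖D‖ ≤ 2‖A₀‖‖Z₀‖/(‖A₀‖ + α‖Z₀‖). -/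
open Matrix

-- the induced `L∞` operator norm (max row sum) on matrices
attribute [local instance] Matrix.linftyOpNormedAddCommGroup Matrix.linftyOpNormedRing
attribute [local instance] Matrix.linftyOpNormedSpace

/-! `P = B₁B₁†` is idempotent, so `P - c•1` acts as `1 - c` on the range of `P` and as `-c` on
its kernel, whence `(P - c•1)⁻¹ = (c(1-c))⁻¹ • (P - (1-c)•1)`. This bounds `‖Z₀‖`, and with
`‖D‖ ≤ 2‖Z₀‖` gives `|δ|‖Z(δ)‖ ≤ (b/β)(|δ|+1)/|δ+1|`; the claim then follows from
`‖Z A Z + B Z‖ ≤ ‖A‖‖Z‖² + ‖B‖‖Z‖`. -/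

namespace Matrix

variable {n : Type*} [Fintype n] [DecidableEq n]

protected theorem inv_neg {α : Type*} [CommRing α] (A : Matrix n n α) : (-A)⁻¹ = -A⁻¹ := by
  by_cases h : IsUnit A.det
  · exact inv_eq_left_inv (by rw [neg_mul_neg, nonsing_inv_mul _ h])
  · have h' : ¬IsUnit (-A).det := by
      rwa [det_neg, IsUnit.mul_left_iff ((isUnit_neg_one (α := α)).pow _)]
    rw [nonsing_inv_apply_not_isUnit _ h, nonsing_inv_apply_not_isUnit _ h', neg_zero]

theorem linfty_opNorm_one_le {α : Type*} [NormedRing α] [NormOneClass α] :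
    ‖(1 : Matrix n n α)‖ ≤ 1 := by
  rw [← diagonal_one, linfty_opNorm_diagonal]
  exact pi_norm_le_iff_of_nonneg zero_le_one |>.2 fun _ => norm_one.le

theorem inv_sub_smul_one_of_isIdempotentElem {𝕜 : Type*} [Field 𝕜] {P : Matrix n n 𝕜}
    (hP : IsIdempotentElem P) {c : 𝕜} (hc0 : c ≠ 0) (hc1 : c ≠ 1) :
    (P - c • 1)⁻¹ = (c * (1 - c))⁻¹ • (P - (1 - c) • 1) := by
  have hunit : c * (1 - c) ≠ 0 := mul_ne_zero hc0 (sub_ne_zero.2 hc1.symm)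
  have hprod : (P - c • 1) * (P - (1 - c) • 1) = (c * (1 - c)) • 1 := by
    simp only [sub_mul, mul_sub, smul_mul_assoc, mul_smul_comm, one_mul, mul_one, hP.eq]
    module
  apply inv_eq_right_inv
  rw [mul_smul_comm, hprod, smul_smul, inv_mul_cancel₀ hunit, one_smul]

theorem linfty_opNorm_inv_sub_smul_one_le {𝕜 : Type*} [NormedField 𝕜] {P : Matrix n n 𝕜}
    (hP : IsIdempotentElem P) {c : 𝕜} (hc0 : c ≠ 0) (hc1 : c ≠ 1) :
    ‖(P - c • 1)⁻¹‖ ≤ (‖P‖ + ‖1 - c‖) / (‖c‖ * ‖1 - c‖) := by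
  rw [inv_sub_smul_one_of_isIdempotentElem hP hc0 hc1, norm_smul, norm_inv, norm_mul,
    inv_mul_eq_div]
  gcongr
  calc ‖P - (1 - c) • 1‖ ≤ ‖P‖ + ‖1 - c‖ * ‖(1 : Matrix n n 𝕜)‖ :=
        (norm_sub_le _ _).trans (add_le_add_right (norm_smul_le _ _) _)
    _ ≤ ‖P‖ + ‖1 - c‖ := by
        gcongr
        exact mul_le_of_le_one_right (norm_nonneg _) linfty_opNorm_one_le

theorem linfty_opNorm_inv_sub_add_one_smul_one_le {𝕜 : Type*} [NormedField 𝕜]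
    {P : Matrix n n 𝕜} (hP : IsIdempotentElem P) (hPnorm : 1 ≤ ‖P‖) {δ : 𝕜} (hδ0 : δ ≠ 0)
    (hδ1 : δ ≠ -1) :
    ‖(P - (δ + 1) • 1)⁻¹‖ ≤ (‖δ‖ + 1) * ‖P‖ / (‖δ + 1‖ * ‖δ‖) := by
  have h := linfty_opNorm_inv_sub_smul_one_le hP (c := δ + 1)
    (by rwa [Ne, add_eq_zero_iff_eq_neg]) (by simpa using hδ0)
  rw [show 1 - (δ + 1) = -δ by ring, norm_neg] at h
  exact h.trans (by gcongr; nlinarith [norm_nonneg δ])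

theorem linfty_opNorm_mul_mul_add_mul_le {l m α : Type*} [Fintype l] [Fintype m] [NormedRing α]
    (Z : Matrix m l α) (A : Matrix l m α) (B : Matrix m m α) :
    ‖Z * A * Z + B * Z‖ ≤ ‖A‖ * ‖Z‖ ^ 2 + ‖B‖ * ‖Z‖ := by
  have hZAZ : ‖Z * A * Z‖ ≤ ‖Z‖ * ‖A‖ * ‖Z‖ :=
    (linfty_opNorm_mul _ _).trans (by gcongr; exact linfty_opNorm_mul _ _)
  calc ‖Z * A * Z + B * Z‖ ≤ ‖Z‖ * ‖A‖ * ‖Z‖ + ‖B‖ * ‖Z‖ :=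
        (norm_add_le _ _).trans (add_le_add hZAZ (linfty_opNorm_mul _ _))
    _ = ‖A‖ * ‖Z‖ ^ 2 + ‖B‖ * ‖Z‖ := by ring

end Matrix

theorem two_mul_mul_div_add_le {x y α : ℝ} (hx : 0 ≤ x) (hy : 0 ≤ y) (hα : 0 ≤ α) :
    2 * x * y / (x + α * y) ≤ 2 * y :=
  div_le_of_le_mul₀ (by positivity) (by positivity) (by nlinarith [mul_nonneg hα hy])

theorem mul_quadratic_le_of_mul_le {u t r s α β : ℝ} (hu : 0 < u) (ht : 0 ≤ t)
    (hα : 0 ≤ α) (hβ : 0 ≤ β) (hut : u * t ≤ r * s) :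
    u * (α * t ^ 2 + β * t) ≤ 1 / u * s ^ 2 * (α * r ^ 2) + s * (r * β) := by
  have hsq : (u * t) ^ 2 ≤ (r * s) ^ 2 := pow_le_pow_left₀ (by positivity) hut 2
  have hquad : u * (α * t ^ 2) ≤ 1 / u * s ^ 2 * (α * r ^ 2) := by
    rw [show u * (α * t ^ 2) = α * (u * t) ^ 2 / u by field_simp,
      show 1 / u * s ^ 2 * (α * r ^ 2) = α * (r * s) ^ 2 / u by ring]
    gcongr
  have hlin : u * (β * t) ≤ s * (r * β) := by nlinarith
  linarith

theorem stmt_19_general {k m p : ℕ}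
    (A₁₂ : Matrix (Fin k) (Fin m) ℝ) (A₂₂ : Matrix (Fin m) (Fin m) ℝ)
    (B₁ : Matrix (Fin k) (Fin p) ℝ) (B₂ : Matrix (Fin m) (Fin p) ℝ)
    -- `Bd` is the Moore–Penrose pseudoinverse `B₁†` of `B₁`
    (Bd : Matrix (Fin p) (Fin k) ℝ)
    (h1 : B₁ * Bd * B₁ = B₁)
    (hBnorm : 1 ≤ ‖B₁ * Bd‖)
    (δ : ℝ) (hδ0 : δ ≠ 0) (hδ1 : δ ≠ -1)
    -- the data of the fixed-point iteration
    (Γ : Matrix (Fin m) (Fin k) ℝ)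
    (Z₀ : Matrix (Fin m) (Fin k) ℝ)
    (hZ₀ : Z₀ = (B₂ * Bd * A₁₂ - A₂₂)⁻¹ * Γ
        * (B₁ * Bd - (δ + 1) • (1 : Matrix (Fin k) (Fin k) ℝ))⁻¹)
    (A₀ : Matrix (Fin k) (Fin k) ℝ)
    -- the constants
    (α β γ a b : ℝ)
    (hα : α = ‖A₁₂ - B₁ * Bd * A₁₂‖) (hβ : β = ‖A₂₂ - B₂ * Bd * A₁₂‖)
    (hγ : γ = ‖Γ‖ * ‖(A₂₂ - B₂ * Bd * A₁₂)⁻¹‖)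
    (hb : b = 3 * ‖B₁ * Bd‖ * γ * β) (ha : a = α * (b / β) ^ 2)
    -- `D` satisfies the fixed-point bound, and `Z(δ) = Z₀ + D`
    (D : Matrix (Fin m) (Fin k) ℝ)
    (hD : ‖D‖ ≤ 2 * ‖A₀‖ * ‖Z₀‖ / (‖A₀‖ + α * ‖Z₀‖)) :
    ‖δ • ((Z₀ + D) * (A₁₂ - B₁ * Bd * A₁₂) * (Z₀ + D)
        + (A₂₂ - B₂ * Bd * A₁₂) * (Z₀ + D))‖
      ≤ (1 / |δ|) * ((|δ| + 1) / |δ + 1|) ^ 2 * a + ((|δ| + 1) / |δ + 1|) * b := by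
  set P := B₁ * Bd
  set r := 3 * ‖P‖ * γ
  have hP : IsIdempotentElem P := by
    rw [IsIdempotentElem, ← Matrix.mul_assoc, h1]
  have hu : 0 < |δ| := abs_pos.2 hδ0
  have hα0 : 0 ≤ α := hα ▸ norm_nonneg _
  have hγ0 : 0 ≤ γ := hγ ▸ by positivity
  have hNinv := linfty_opNorm_inv_sub_add_one_smul_one_le hP hBnorm hδ0 hδ1
  simp only [Real.norm_eq_abs] at hNinv
  have hZ₀n : ‖Z₀‖ ≤ γ * ‖(P - (δ + 1) • 1)⁻¹‖ := by
    rw [hZ₀, hγ, ← neg_sub, Matrix.inv_neg, Matrix.neg_mul, Matrix.neg_mul, norm_neg,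
      mul_comm ‖Γ‖]
    exact (linfty_opNorm_mul _ _).trans (by gcongr; exact linfty_opNorm_mul _ _)
  have hZ : |δ| * ‖Z₀ + D‖ ≤ r * ((|δ| + 1) / |δ + 1|) := by
    have hD' : ‖D‖ ≤ 2 * ‖Z₀‖ :=
      hD.trans (two_mul_mul_div_add_le (norm_nonneg _) (norm_nonneg _) hα0)
    have hsum : ‖Z₀ + D‖ ≤ 3 * ‖Z₀‖ := (norm_add_le _ _).trans (by linarith)
    calc |δ| * ‖Z₀ + D‖ ≤ |δ| * (3 * (γ * ((|δ| + 1) * ‖P‖ / (|δ + 1| * |δ|)))) := by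
          gcongr
          exact hsum.trans (by gcongr; exact hZ₀n.trans (by gcongr))
      _ = r * ((|δ| + 1) / |δ + 1|) := by field_simp; ring
  have hr : b / β = r := by
    rcases eq_or_ne β 0 with h | h
    · -- `β = 0` forces the matrix to vanish, and then `γ = 0` through the junk value `0⁻¹ = 0`
      have hzero : A₂₂ - B₂ * Bd * A₁₂ = 0 := norm_eq_zero.1 (hβ ▸ h)
      simp [h, r, hγ, hzero]
    · rw [hb, mul_div_assoc, div_self h, mul_one]
  rw [ha, hr, hb]
  calc _ ≤ |δ| * (α * ‖Z₀ + D‖ ^ 2 + β * ‖Z₀ + D‖) := by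
        rw [norm_smul, Real.norm_eq_abs, hα, hβ]
        gcongr
        exact linfty_opNorm_mul_mul_add_mul_le _ _ _
    _ ≤ _ := mul_quadratic_le_of_mul_le hu (norm_nonneg _) hα0 (hβ ▸ norm_nonneg _) hZ

/-- Conservative coupling bound: for all `δ ∈ ℝ\{−1,0}` (with
`B₁B₁† − (δ+1)I` invertible),
`‖δ𝓕(Z(δ))‖ ≤ (1/|δ|)((|δ|+1)/|δ+1|)² a + ((|δ|+1)/|δ+1|) b`, where
`a = α(b/β)²`, `b = 3‖B₁B₁†‖γβ`, `γ = ‖Γ‖‖(A₂₂ − B₂B₁†A₁₂)⁻¹‖`,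
`α = ‖A₁₂ − B₁B₁†A₁₂‖`, `β = ‖A₂₂ − B₂B₁†A₁₂‖`, and `Z(δ) = Z₀ + D` with
`‖D‖ ≤ 2‖A₀‖‖Z₀‖/(‖A₀‖ + α‖Z₀‖)`. -/
theorem stmt_19 {k m p : ℕ}
    (A₁₁ : Matrix (Fin k) (Fin k) ℝ) (A₁₂ : Matrix (Fin k) (Fin m) ℝ)
    (A₂₁ : Matrix (Fin m) (Fin k) ℝ) (A₂₂ : Matrix (Fin m) (Fin m) ℝ)
    (B₁ : Matrix (Fin k) (Fin p) ℝ) (B₂ : Matrix (Fin m) (Fin p) ℝ)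
    -- `Bd` is the Moore–Penrose pseudoinverse `B₁†` of `B₁`
    (Bd : Matrix (Fin p) (Fin k) ℝ)
    (h1 : B₁ * Bd * B₁ = B₁) (h2 : Bd * B₁ * Bd = Bd)
    (h3 : (B₁ * Bd)ᵀ = B₁ * Bd) (h4 : (Bd * B₁)ᵀ = Bd * B₁)
    (hinvβ : IsUnit (A₂₂ - B₂ * Bd * A₁₂))
    (hBnorm : 1 ≤ ‖B₁ * Bd‖)
    (δ : ℝ) (hδ0 : δ ≠ 0) (hδ1 : δ ≠ -1)
    (hinvδ : IsUnit (B₁ * Bd - (δ + 1) • (1 : Matrix (Fin k) (Fin k) ℝ)))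
    -- the data of the fixed-point iteration
    (Γ : Matrix (Fin m) (Fin k) ℝ)
    (hΓ : Γ = (A₂₂ * (B₂ * Bd) + A₂₁) - (B₂ * Bd) * (A₁₂ * (B₂ * Bd) + A₁₁))
    (Ξ : Matrix (Fin k) (Fin k) ℝ)
    (hΞ : Ξ = -((B₁ * Bd - 1) * (A₁₁ + A₁₂ * (B₂ * Bd))))
    (Z₀ : Matrix (Fin m) (Fin k) ℝ)
    (hZ₀ : Z₀ = (B₂ * Bd * A₁₂ - A₂₂)⁻¹ * Γ
        * (B₁ * Bd - (δ + 1) • (1 : Matrix (Fin k) (Fin k) ℝ))⁻¹)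
    (A₀ : Matrix (Fin k) (Fin k) ℝ)
    (hA₀ : A₀ = Ξ * (B₁ * Bd - (δ + 1) • (1 : Matrix (Fin k) (Fin k) ℝ))⁻¹
        - (B₁ * Bd * A₁₂ - A₁₂) * Z₀)
    -- the constants
    (α β γ a b : ℝ)
    (hα : α = ‖A₁₂ - B₁ * Bd * A₁₂‖) (hβ : β = ‖A₂₂ - B₂ * Bd * A₁₂‖)
    (hγ : γ = ‖Γ‖ * ‖(A₂₂ - B₂ * Bd * A₁₂)⁻¹‖)
    (hb : b = 3 * ‖B₁ * Bd‖ * γ * β) (ha : a = α * (b / β) ^ 2)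
    -- `D` satisfies the fixed-point bound, and `Z(δ) = Z₀ + D`
    (D : Matrix (Fin m) (Fin k) ℝ)
    (hD : ‖D‖ ≤ 2 * ‖A₀‖ * ‖Z₀‖ / (‖A₀‖ + α * ‖Z₀‖)) :
    ‖δ • ((Z₀ + D) * (A₁₂ - B₁ * Bd * A₁₂) * (Z₀ + D)
        + (A₂₂ - B₂ * Bd * A₁₂) * (Z₀ + D))‖
      ≤ (1 / |δ|) * ((|δ| + 1) / |δ + 1|) ^ 2 * a + ((|δ| + 1) / |δ + 1|) * b :=
  stmt_19_general A₁₂ A₂₂ B₁ B₂ Bd h1 hBnorm δ hδ0 hδ1 Γ Z₀ hZ₀ A₀ α β γ a b hα hβ hγ hb ha D hD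
end
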